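/- arXiv:1708.06671 — 2 statements merged into one kernel-verified Lean document; each statement's English description precedes it below -/
import Mathlib

section
/- Let τ ∈ ℝ, let Ω ⊆ ℝ² be open, and let u, v : Ω → ℝ be C² functions with v_x² + v_y² < 1 on Ω satisfying the twin relations u_x = v_y/ω̃ − τy and u_y = −v_x/ω̃ + τx on Ω, where ω̃ = (1 − v_x² − v_y²)^(1/2). Then u satisfies the minimal surface equation (1+β²)u_xx − 2αβ u_xy + (1+α²)u_yy = 0 on Ω, where α = u_x + τy and β = u_y − τx, and v satisfies the spacelike constant-mean-curvature-τ equation (1−v_y²)v_xx + 2 v_x v_y v_xy + (1−v_x²)v_yy = 2τ ω̃³ on Ω. -/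
/-!
With `α = u_x + τy`, `β = u_y − τx`, the operator in the minimal surface equation for `u` is
`ω³ div((α, β)/ω)` and the one in the CMC equation for `v` is `ω̃³ div(∇v/ω̃)`. The twin relations
say `(α, β) = (v_y, −v_x)/ω̃`, whence `ω = 1/ω̃`, `(α, β)/ω = (v_y, −v_x)` and `∇v/ω̃ = (−β, α)`.
So the two divergences are `v_yx − v_xy = 0` and `u_xy − u_yx + 2τ = 2τ`, by the symmetry of the
second derivatives of `v` and of `u`.
-/

noncomputable def px (f : ℝ × ℝ → ℝ) (p : ℝ × ℝ) : ℝ := fderiv ℝ f p (1, 0)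

noncomputable def py (f : ℝ × ℝ → ℝ) (p : ℝ × ℝ) : ℝ := fderiv ℝ f p (0, 1)

/-- Lorentzian area element `ω̃ = (1 − v_x² − v_y²)^(1/2)` of the graph of `v`. -/
noncomputable def omegT (v : ℝ × ℝ → ℝ) (p : ℝ × ℝ) : ℝ :=
  Real.sqrt (1 - (px v p) ^ 2 - (py v p) ^ 2)

open Filter Topology

noncomputable def divergence (a b : ℝ × ℝ → ℝ) (p : ℝ × ℝ) : ℝ := px a p + py b p

/-- `ε = 1` gives the area element `ω` of a graph in `Nil₃(τ)` (with `(a, b) = (α, β)`),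
`ε = -1` the Lorentzian one `ω̃` (with `(a, b) = ∇v`). -/
noncomputable def areaElement (ε : ℝ) (a b : ℝ × ℝ → ℝ) (q : ℝ × ℝ) : ℝ :=
  √(1 + ε * (a q ^ 2 + b q ^ 2))

noncomputable def alpha (τ : ℝ) (u : ℝ × ℝ → ℝ) (q : ℝ × ℝ) : ℝ := px u q + τ * q.2

noncomputable def beta (τ : ℝ) (u : ℝ × ℝ → ℝ) (q : ℝ × ℝ) : ℝ := py u q - τ * q.1

def TwinRelations (τ : ℝ) (u v : ℝ × ℝ → ℝ) (q : ℝ × ℝ) : Prop :=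
  px v q ^ 2 + py v q ^ 2 < 1 ∧
    px u q = py v q / omegT v q - τ * q.2 ∧ py u q = -px v q / omegT v q + τ * q.1

section

variable {τ : ℝ} {f a b u v : ℝ × ℝ → ℝ} {p : ℝ × ℝ}

theorem ContDiffAt.differentiableAt_fderiv_apply (hf : ContDiffAt ℝ 2 f p) (w : ℝ × ℝ) :
    DifferentiableAt ℝ (fun q => fderiv ℝ f q w) p :=
  ((hf.fderiv_right (m := 1) (by norm_num)).differentiableAt one_ne_zero).clm_apply
    (differentiableAt_const w)

theorem ContDiffAt.py_px_eq (hf : ContDiffAt ℝ 2 f p) : py (px f) p = px (py f) p := by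
  have hdf : DifferentiableAt ℝ (fderiv ℝ f) p :=
    (hf.fderiv_right (m := 1) (by norm_num)).differentiableAt one_ne_zero
  show fderiv ℝ (fun q => fderiv ℝ f q (1, 0)) p (0, 1) =
    fderiv ℝ (fun q => fderiv ℝ f q (0, 1)) p (1, 0)
  rw [fderiv_clm_apply hdf (differentiableAt_const _),
    fderiv_clm_apply hdf (differentiableAt_const _)]
  simpa using hf.isSymmSndFDerivAt (by simp) (0, 1) (1, 0)

theorem px_neg : px (fun q => -f q) p = -px f p := by
  simp [px]

theorem py_neg : py (fun q => -f q) p = -py f p := by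
  simp [py]

theorem divergence_congr {a' b' : ℝ × ℝ → ℝ} (ha : a =ᶠ[𝓝 p] a') (hb : b =ᶠ[𝓝 p] b') :
    divergence a b p = divergence a' b' p := by
  simp only [divergence, px, py, ha.fderiv_eq, hb.fderiv_eq]

theorem fderiv_div_sqrt_apply (ε : ℝ) (ha : DifferentiableAt ℝ a p)
    (hb : DifferentiableAt ℝ b p) (hpos : 0 < 1 + ε * (a p ^ 2 + b p ^ 2)) (w : ℝ × ℝ) :
    fderiv ℝ (fun q => a q / √(1 + ε * (a q ^ 2 + b q ^ 2))) p w =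
      ((1 + ε * b p ^ 2) * fderiv ℝ a p w - ε * a p * b p * fderiv ℝ b p w) /
        √(1 + ε * (a p ^ 2 + b p ^ 2)) ^ 3 := by
  have hNpos : 0 < √(1 + ε * (a p ^ 2 + b p ^ 2)) := Real.sqrt_pos.2 hpos
  have hN2 : √(1 + ε * (a p ^ 2 + b p ^ 2)) ^ 2 = 1 + ε * (a p ^ 2 + b p ^ 2) :=
    Real.sq_sqrt hpos.le
  have hN := ((((ha.hasFDerivAt.pow 2).add (hb.hasFDerivAt.pow 2)).const_mul ε).const_add 1).sqrt
    hpos.ne'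
  have h : HasFDerivAt (fun q => a q / √(1 + ε * (a q ^ 2 + b q ^ 2))) _ p :=
    ha.hasFDerivAt.mul ((hasDerivAt_inv hNpos.ne').comp_hasFDerivAt p hN)
  rw [h.fderiv]
  simp only [Pi.add_apply, one_div, mul_inv_rev, Nat.add_one_sub_one, pow_one, nsmul_eq_mul,
    Nat.cast_ofNat, smul_add, neg_smul, smul_neg, add_apply, neg_apply,
    smul_apply, smul_eq_mul]
  field_simp
  linear_combination (fderiv ℝ a p w) * hN2

theorem divergence_div_areaElement (ε : ℝ) (ha : DifferentiableAt ℝ a p)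
    (hb : DifferentiableAt ℝ b p) (hpos : 0 < 1 + ε * (a p ^ 2 + b p ^ 2)) :
    divergence (fun q => a q / areaElement ε a b q) (fun q => b q / areaElement ε a b q) p =
      ((1 + ε * b p ^ 2) * px a p - ε * a p * b p * (py a p + px b p)
          + (1 + ε * a p ^ 2) * py b p) / areaElement ε a b p ^ 3 := by
  have hswap : (fun q => b q / areaElement ε a b q) =
      fun q => b q / √(1 + ε * (b q ^ 2 + a q ^ 2)) := by
    simp only [areaElement, add_comm (a _ ^ 2)]
  rw [divergence, hswap]
  simp only [px, py, areaElement]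
  rw [fderiv_div_sqrt_apply ε ha hb hpos,
    fderiv_div_sqrt_apply ε hb ha (by rwa [add_comm (b p ^ 2)]), add_comm (b p ^ 2)]
  ring

theorem fderiv_alpha_apply (hu : DifferentiableAt ℝ (px u) p) (w : ℝ × ℝ) :
    fderiv ℝ (alpha τ u) p w = fderiv ℝ (px u) p w + τ * w.2 := by
  have h : HasFDerivAt (alpha τ u) _ p := hu.hasFDerivAt.add (hasFDerivAt_snd.const_mul τ)
  rw [h.fderiv]
  simp

theorem px_alpha (hu : DifferentiableAt ℝ (px u) p) : px (alpha τ u) p = px (px u) p := by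
  simp [px, fderiv_alpha_apply hu]

theorem py_alpha (hu : DifferentiableAt ℝ (px u) p) : py (alpha τ u) p = py (px u) p + τ := by
  simp [py, fderiv_alpha_apply hu]

theorem fderiv_beta_apply (hu : DifferentiableAt ℝ (py u) p) (w : ℝ × ℝ) :
    fderiv ℝ (beta τ u) p w = fderiv ℝ (py u) p w - τ * w.1 := by
  have h : HasFDerivAt (beta τ u) _ p := hu.hasFDerivAt.sub (hasFDerivAt_fst.const_mul τ)
  rw [h.fderiv]
  simp

theorem px_beta (hu : DifferentiableAt ℝ (py u) p) : px (beta τ u) p = px (py u) p - τ := by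
  simp [px, fderiv_beta_apply hu]

theorem py_beta (hu : DifferentiableAt ℝ (py u) p) : py (beta τ u) p = py (py u) p := by
  simp [py, fderiv_beta_apply hu]

theorem omegT_eq_areaElement : omegT v = areaElement (-1) (px v) (py v) := by
  ext q
  simp only [omegT, areaElement]
  ring_nf

namespace TwinRelations

theorem omegT_pos (h : TwinRelations τ u v p) : 0 < omegT v p :=
  Real.sqrt_pos.2 (by linarith [h.1])

theorem alpha_eq (h : TwinRelations τ u v p) : alpha τ u p = py v p / omegT v p := by
  rw [alpha, h.2.1]
  ring

theorem beta_eq (h : TwinRelations τ u v p) : beta τ u p = -px v p / omegT v p := by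
  rw [beta, h.2.2]
  ring

theorem areaElement_eq (h : TwinRelations τ u v p) :
    areaElement 1 (alpha τ u) (beta τ u) p = (omegT v p)⁻¹ := by
  have hW := h.omegT_pos
  have hW2 : omegT v p ^ 2 = 1 - px v p ^ 2 - py v p ^ 2 := Real.sq_sqrt (by linarith [h.1])
  rw [areaElement, ← Real.sqrt_sq (inv_nonneg.2 hW.le), h.alpha_eq, h.beta_eq]
  congr 1
  field_simp
  linear_combination hW2

end TwinRelations

theorem minimalSurfaceEquation_of_twinRelations (hu : ContDiffAt ℝ 2 u p)
    (hv : ContDiffAt ℝ 2 v p) (htwin : ∀ᶠ q in 𝓝 p, TwinRelations τ u v q) :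
    (1 + (py u p - τ * p.1) ^ 2) * px (px u) p
          - 2 * (px u p + τ * p.2) * (py u p - τ * p.1) * py (px u) p
          + (1 + (px u p + τ * p.2) ^ 2) * py (py u) p = 0 := by
  have hux : DifferentiableAt ℝ (px u) p := hu.differentiableAt_fderiv_apply (1, 0)
  have huy : DifferentiableAt ℝ (py u) p := hu.differentiableAt_fderiv_apply (0, 1)
  have hα : DifferentiableAt ℝ (alpha τ u) p := hux.add (by fun_prop)
  have hβ : DifferentiableAt ℝ (beta τ u) p := huy.sub (by fun_prop)
  have hdiv : divergence (fun q => alpha τ u q / areaElement 1 (alpha τ u) (beta τ u) q)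
      (fun q => beta τ u q / areaElement 1 (alpha τ u) (beta τ u) q) p = 0 := by
    rw [divergence_congr (a' := py v) (b' := fun q => -px v q), divergence, py_neg,
      hv.py_px_eq, add_neg_cancel]
    · filter_upwards [htwin] with q hq
      rw [hq.areaElement_eq, hq.alpha_eq]
      field_simp [hq.omegT_pos.ne']
    · filter_upwards [htwin] with q hq
      rw [hq.areaElement_eq, hq.beta_eq]
      field_simp [hq.omegT_pos.ne']
  have hω : 0 < areaElement 1 (alpha τ u) (beta τ u) p := Real.sqrt_pos.2 (by positivity)
  rw [divergence_div_areaElement 1 hα hβ (by positivity), div_eq_zero_iff] at hdiv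
  have hexpr := hdiv.resolve_right (pow_pos hω 3).ne'
  rw [px_alpha hux, py_alpha hux, px_beta huy, py_beta huy, ← hu.py_px_eq] at hexpr
  simp only [alpha, beta] at hexpr
  linear_combination hexpr

theorem spacelikeCMCEquation_of_twinRelations (hu : ContDiffAt ℝ 2 u p)
    (hv : ContDiffAt ℝ 2 v p) (htwin : ∀ᶠ q in 𝓝 p, TwinRelations τ u v q) :
    (1 - (py v p) ^ 2) * px (px v) p + 2 * px v p * py v p * py (px v) p
        + (1 - (px v p) ^ 2) * py (py v) p = 2 * τ * (omegT v p) ^ 3 := by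
  have hux : DifferentiableAt ℝ (px u) p := hu.differentiableAt_fderiv_apply (1, 0)
  have huy : DifferentiableAt ℝ (py u) p := hu.differentiableAt_fderiv_apply (0, 1)
  have hvx : DifferentiableAt ℝ (px v) p := hv.differentiableAt_fderiv_apply (1, 0)
  have hvy : DifferentiableAt ℝ (py v) p := hv.differentiableAt_fderiv_apply (0, 1)
  have hdiv : divergence (fun q => px v q / areaElement (-1) (px v) (py v) q)
      (fun q => py v q / areaElement (-1) (px v) (py v) q) p = 2 * τ := by
    rw [divergence_congr (a' := fun q => -beta τ u q) (b' := alpha τ u), divergence, px_neg,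
      px_beta huy, py_alpha hux, hu.py_px_eq]
    · ring
    · filter_upwards [htwin] with q hq
      rw [← omegT_eq_areaElement, hq.beta_eq]
      ring
    · filter_upwards [htwin] with q hq
      rw [← omegT_eq_areaElement, hq.alpha_eq]
  have hp := htwin.self_of_nhds
  rw [divergence_div_areaElement (-1) hvx hvy (by linarith [hp.1]), ← omegT_eq_areaElement,
    div_eq_iff (pow_pos hp.omegT_pos 3).ne', ← hv.py_px_eq] at hdiv
  linear_combination hdiv

end

/-- if `u, v` are `C²` and satisfy the twin relations, then `u`
satisfies the minimal surface equation in `Nil₃(τ)` and `v` satisfies the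
spacelike CMC-`τ` equation in `𝕃³`. -/
theorem twin_relations_give_pdes (τ : ℝ) (Ω : Set (ℝ × ℝ)) (hΩ : IsOpen Ω)
    (u v : ℝ × ℝ → ℝ)
    (hu : ContDiffOn ℝ 2 u Ω) (hv : ContDiffOn ℝ 2 v Ω)
    (hsp : ∀ p ∈ Ω, (px v p) ^ 2 + (py v p) ^ 2 < 1)
    (htwinx : ∀ p ∈ Ω, px u p = py v p / omegT v p - τ * p.2)
    (htwiny : ∀ p ∈ Ω, py u p = -px v p / omegT v p + τ * p.1) :
    ∀ p ∈ Ω,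
      ((1 + (py u p - τ * p.1) ^ 2) * px (px u) p
          - 2 * (px u p + τ * p.2) * (py u p - τ * p.1) * py (px u) p
          + (1 + (px u p + τ * p.2) ^ 2) * py (py u) p = 0) ∧
      ((1 - (py v p) ^ 2) * px (px v) p
          + 2 * px v p * py v p * py (px v) p
          + (1 - (px v p) ^ 2) * py (py v) p = 2 * τ * (omegT v p) ^ 3) := by
  intro p hp
  have hΩp : Ω ∈ 𝓝 p := hΩ.mem_nhds hp
  have htwin : ∀ᶠ q in 𝓝 p, TwinRelations τ u v q :=
    mem_of_superset hΩp fun q hq => ⟨hsp q hq, htwinx q hq, htwiny q hq⟩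
  exact ⟨minimalSurfaceEquation_of_twinRelations (hu.contDiffAt hΩp) (hv.contDiffAt hΩp) htwin,
    spacelikeCMCEquation_of_twinRelations (hu.contDiffAt hΩp) (hv.contDiffAt hΩp) htwin⟩
end

section
/- Let τ ∈ ℝ, let Ω ⊆ ℝ² be open, and let u, v : Ω → ℝ be C² functions with v_x² + v_y² < 1 satisfying the twin relations u_x = v_y/ω̃ − τy and u_y = −v_x/ω̃ + τx on Ω, where ω̃ = (1 − v_x² − v_y²)^(1/2). Set α = u_x + τy, β = u_y − τx, ω = (1 + α² + β²)^(1/2). Then at every point of Ω the complex numbers Q₁₁ = 2u_xx/ω + (2i/ω²)(αβ u_xx − (1+α²) u_xy) and Q̃₁₁ = (2/ω̃²)(v_x v_y v_xx + (1−v_x²) v_xy) + (2i/ω̃) v_xx − 2iτ(1−v_x²) are equal. -/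
/-- `α = u_x + τ y`. -/
noncomputable def alph (τ : ℝ) (u : ℝ × ℝ → ℝ) (p : ℝ × ℝ) : ℝ := px u p + τ * p.2

/-- `β = u_y − τ x`. -/
noncomputable def bet (τ : ℝ) (u : ℝ × ℝ → ℝ) (p : ℝ × ℝ) : ℝ := py u p - τ * p.1

/-- Riemannian area element `ω = (1 + α² + β²)^(1/2)` of the graph of `u`. -/
noncomputable def omeg (τ : ℝ) (u : ℝ × ℝ → ℝ) (p : ℝ × ℝ) : ℝ :=
  Real.sqrt (1 + (alph τ u p) ^ 2 + (bet τ u p) ^ 2)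

/-- `(e₁,e₁)`-component of the Abresch–Rosenberg differential of the minimal
graph of `u` in `Nil₃(τ)`:
`Q₁₁ = 2u_xx/ω + (2i/ω²)(αβ u_xx − (1+α²) u_xy)`. -/
noncomputable def Q11 (τ : ℝ) (u : ℝ × ℝ → ℝ) (p : ℝ × ℝ) : ℂ :=
  (2 * px (px u) p / omeg τ u p : ℝ) +
    Complex.I * ((2 / (omeg τ u p) ^ 2) *
      (alph τ u p * bet τ u p * px (px u) p - (1 + (alph τ u p) ^ 2) * py (px u) p) : ℝ)

/-- `(ẽ₁,ẽ₁)`-component of the Hopf differential of the spacelike CMC-`τ`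
graph of `v` in `𝕃³`:
`Q̃₁₁ = (2/ω̃²)(v_x v_y v_xx + (1−v_x²) v_xy) + (2i/ω̃) v_xx − 2iτ(1−v_x²)`. -/
noncomputable def QT11 (τ : ℝ) (v : ℝ × ℝ → ℝ) (p : ℝ × ℝ) : ℂ :=
  ((2 / (omegT v p) ^ 2) *
      (px v p * py v p * px (px v) p + (1 - (px v p) ^ 2) * py (px v) p) : ℝ) +
    Complex.I * ((2 / omegT v p) * px (px v) p - 2 * τ * (1 - (px v p) ^ 2) : ℝ)

/-!
The twin relations say `α = v_y/ω̃` and `β = -v_x/ω̃`, hence `ω ω̃ = 1`. Differentiating them in `x`,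
with `∂ₓ(1/ω̃) = (v_x v_xx + v_y v_xy)/ω̃³`, expresses `u_xx` and `u_yx = u_xy` through the first and
second derivatives of `v`. Substituted into `Q₁₁`, these give `Q̃₁₁` once `v_x² + v_y²` is
eliminated by `ω̃² = 1 - v_x² - v_y²`.
-/

open Filter Topology

lemma px_py_comm {f : ℝ × ℝ → ℝ} {p : ℝ × ℝ} (hf : ContDiffAt ℝ 2 f p) :
    px (py f) p = py (px f) p := by
  have hd : DifferentiableAt ℝ (fderiv ℝ f) p :=
    (hf.fderiv_right (m := 1) (by norm_num)).differentiableAt one_ne_zero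
  have hswap : ∀ w₁ w₂ : ℝ × ℝ,
      fderiv ℝ (fun q => fderiv ℝ f q w₂) p w₁ = fderiv ℝ (fderiv ℝ f) p w₁ w₂ := by
    intro w₁ w₂
    rw [fderiv_clm_apply hd (differentiableAt_const _)]
    simp
  change fderiv ℝ (fun q => fderiv ℝ f q (0, 1)) p (1, 0)
    = fderiv ℝ (fun q => fderiv ℝ f q (1, 0)) p (0, 1)
  rw [hswap, hswap, (hf.isSymmSndFDerivAt (by norm_num)).eq]

section Partials

variable {f : ℝ × ℝ → ℝ} {f' : ℝ × ℝ →L[ℝ] ℝ} {p : ℝ × ℝ}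

lemma HasFDerivAt.px_eq (h : HasFDerivAt f f' p) : px f p = f' (1, 0) := by
  rw [px, h.fderiv]

lemma ContDiffAt.hasFDerivAt_px (hf : ContDiffAt ℝ 2 f p) :
    HasFDerivAt (px f) (fderiv ℝ (px f) p) p :=
  (((hf.fderiv_right (m := 1) (by norm_num)).clm_apply contDiffAt_const).differentiableAt
    one_ne_zero).hasFDerivAt

lemma ContDiffAt.hasFDerivAt_py (hf : ContDiffAt ℝ 2 f p) :
    HasFDerivAt (py f) (fderiv ℝ (py f) p) p :=
  (((hf.fderiv_right (m := 1) (by norm_num)).clm_apply contDiffAt_const).differentiableAt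
    one_ne_zero).hasFDerivAt

end Partials

section Spacelike

variable {v : ℝ × ℝ → ℝ} {p : ℝ × ℝ}

lemma omegT_pos (hsp : px v p ^ 2 + py v p ^ 2 < 1) : 0 < omegT v p :=
  Real.sqrt_pos.mpr (by linarith)

lemma omegT_sq (hsp : px v p ^ 2 + py v p ^ 2 < 1) :
    omegT v p ^ 2 = 1 - px v p ^ 2 - py v p ^ 2 :=
  Real.sq_sqrt (by linarith)

lemma hasFDerivAt_omegT_inv (hv : ContDiffAt ℝ 2 v p) (hsp : px v p ^ 2 + py v p ^ 2 < 1) :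
    HasFDerivAt (fun q => (omegT v q)⁻¹)
      ((omegT v p ^ 3)⁻¹ • (px v p • fderiv ℝ (px v) p + py v p • fderiv ℝ (py v) p)) p := by
  have hvx := hv.hasFDerivAt_px
  have hvy := hv.hasFDerivAt_py
  have hω : HasFDerivAt (omegT v) _ p :=
    (((hvx.pow 2).const_sub 1).fun_sub (hvy.pow 2)).sqrt (by linarith)
  refine (((hasDerivAt_inv (omegT_pos hsp).ne').comp_hasFDerivAt p hω :
    HasFDerivAt (fun q => (omegT v q)⁻¹) _ p)).congr_fderiv ?_
  rw [show √(1 - px v p ^ 2 - py v p ^ 2) = omegT v p from rfl]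
  refine ContinuousLinearMap.ext fun w => ?_
  simp only [one_div, mul_inv_rev, Nat.add_one_sub_one, pow_one, nsmul_eq_mul, Nat.cast_ofNat,
    neg_smul, neg_apply, smul_apply, sub_apply, smul_eq_mul, smul_add, add_apply]
  field_simp
  ring

variable {τ : ℝ} {u : ℝ × ℝ → ℝ}

lemma px_px_eq_of_twin (hv : ContDiffAt ℝ 2 v p) (hsp : px v p ^ 2 + py v p ^ 2 < 1)
    (htwin : px u =ᶠ[𝓝 p] fun q => py v q / omegT v q - τ * q.2) :
    px (px u) p = px (py v) p / omegT v p
      + py v p * (px v p * px (px v) p + py v p * px (py v) p) / omegT v p ^ 3 := by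
  have hF : HasFDerivAt (fun q => py v q * (omegT v q)⁻¹ - τ * q.2) _ p :=
    (hv.hasFDerivAt_py.mul (hasFDerivAt_omegT_inv hv hsp)).sub (hasFDerivAt_snd.const_mul τ)
  rw [(hF.congr_of_eventuallyEq (by simpa only [div_eq_mul_inv] using htwin)).px_eq]
  simp only [px, smul_add, sub_apply, add_apply, smul_apply, smul_eq_mul,
    ContinuousLinearMap.coe_snd', mul_zero, sub_zero, div_eq_mul_inv]
  ring

lemma px_py_eq_of_twin (hv : ContDiffAt ℝ 2 v p) (hsp : px v p ^ 2 + py v p ^ 2 < 1)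
    (htwin : py u =ᶠ[𝓝 p] fun q => -px v q / omegT v q + τ * q.1) :
    px (py u) p = -(px (px v) p / omegT v p
      + px v p * (px v p * px (px v) p + py v p * px (py v) p) / omegT v p ^ 3) + τ := by
  have hF : HasFDerivAt (fun q => -px v q * (omegT v q)⁻¹ + τ * q.1) _ p :=
    (hv.hasFDerivAt_px.neg.mul (hasFDerivAt_omegT_inv hv hsp)).add (hasFDerivAt_fst.const_mul τ)
  rw [(hF.congr_of_eventuallyEq (by simpa only [div_eq_mul_inv] using htwin)).px_eq]
  simp only [Pi.neg_apply, px, smul_add, neg_smul, smul_neg, add_apply, neg_apply, smul_apply,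
    smul_eq_mul, ContinuousLinearMap.coe_fst', mul_one, div_eq_mul_inv, neg_add_rev, add_left_inj]
  ring

lemma alph_eq_of_twin (h : px u p = py v p / omegT v p - τ * p.2) :
    alph τ u p = py v p / omegT v p := by
  rw [alph, h]; ring

lemma bet_eq_of_twin (h : py u p = -px v p / omegT v p + τ * p.1) :
    bet τ u p = -px v p / omegT v p := by
  rw [bet, h]; ring

lemma omeg_eq_inv_omegT (hsp : px v p ^ 2 + py v p ^ 2 < 1)
    (hα : alph τ u p = py v p / omegT v p) (hβ : bet τ u p = -px v p / omegT v p) :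
    omeg τ u p = (omegT v p)⁻¹ := by
  have hw := omegT_pos hsp
  rw [omeg, hα, hβ, ← Real.sqrt_sq (inv_nonneg.mpr hw.le)]
  congr 1
  field_simp
  linear_combination omegT_sq hsp

end Spacelike

/-- under the twin relations, the `(e₁,e₁)`-component of the
Abresch–Rosenberg differential of the minimal graph of `u` in `Nil₃(τ)` equals
the `(ẽ₁,ẽ₁)`-component of the Hopf differential of the dual spacelike CMC-`τ`
graph of `v` in `𝕃³`. -/
theorem abresch_rosenberg_eq_dual_hopf (τ : ℝ) (Ω : Set (ℝ × ℝ)) (hΩ : IsOpen Ω)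
    (u v : ℝ × ℝ → ℝ)
    (hu : ContDiffOn ℝ 2 u Ω) (hv : ContDiffOn ℝ 2 v Ω)
    (hsp : ∀ p ∈ Ω, (px v p) ^ 2 + (py v p) ^ 2 < 1)
    (htwinx : ∀ p ∈ Ω, px u p = py v p / omegT v p - τ * p.2)
    (htwiny : ∀ p ∈ Ω, py u p = -px v p / omegT v p + τ * p.1) :
    ∀ p ∈ Ω, Q11 τ u p = QT11 τ v p := by
  intro p hp
  have hnhds : Ω ∈ 𝓝 p := hΩ.mem_nhds hp
  have hup : ContDiffAt ℝ 2 u p := (hu p hp).contDiffAt hnhds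
  have hvp : ContDiffAt ℝ 2 v p := (hv p hp).contDiffAt hnhds
  have hsp := hsp p hp
  have hα := alph_eq_of_twin (htwinx p hp)
  have hβ := bet_eq_of_twin (htwiny p hp)
  have huxx := px_px_eq_of_twin hvp hsp (eventually_of_mem hnhds htwinx)
  have huxy := (px_py_comm hup).symm.trans
    (px_py_eq_of_twin hvp hsp (eventually_of_mem hnhds htwiny))
  rw [Q11, QT11, huxx, huxy, hα, hβ, omeg_eq_inv_omegT hsp hα hβ, ← px_py_comm hvp]
  have hω := omegT_pos hsp
  have hω2 := omegT_sq hsp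
  refine congrArg₂ (fun a b : ℝ => (a : ℂ) + Complex.I * b) ?_ ?_
  · field_simp
    linear_combination px (py v) p * hω2
  · field_simp
    linear_combination (px (px v) p * omegT v p ^ 2 - τ * omegT v p ^ 3) * hω2
end
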